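/- arXiv:1009.0180 — 5 statements merged into one kernel-verified Lean document; each statement's English description precedes it below -/
import Mathlib

section
/- Let G be an infinite abelian 2-group (every element of G has order a power of 2) possessing exactly one subgroup of cardinality 2. Then G is isomorphic to the quasicyclic 2-group C_{2^∞}. -/
open Quaternion Pointwise

/-- The quasicyclic 2-group `C_{2^∞}`: the subgroup of `ℂˣ` of all `z`
with `z ^ (2 ^ n) = 1` for some `n`. -/
def C2inf : Subgroup ℂˣ where
  carrier := {z | ∃ n : ℕ, z ^ 2 ^ n = 1}
  one_mem' := ⟨0, one_pow _⟩
  mul_mem' := by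
    rintro a b ⟨n, hn⟩ ⟨m, hm⟩
    exact ⟨n + m, by rw [mul_pow, pow_add, pow_mul, hn, one_pow, one_mul, pow_mul', hm, one_pow]⟩
  inv_mem' := by
    rintro a ⟨n, hn⟩
    exact ⟨n, by rw [inv_pow, hn, inv_one]⟩

/-- The canonical embedding of `ℂ` into the real quaternions `ℍ`. -/
noncomputable def complexToQuaternion : ℂ →ₐ[ℝ] ℍ[ℝ] :=
  Complex.lift ⟨⟨0, 1, 0, 0⟩, by ext <;> simp <;> erw [QuaternionAlgebra.mk_mul_mk] <;> norm_num⟩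

/-- The quaternion `i` as a unit of `ℍ`. -/
noncomputable def quatI : ℍ[ℝ]ˣ := ⟨⟨0, 1, 0, 0⟩, -⟨0, 1, 0, 0⟩, by ext <;> simp <;> erw [QuaternionAlgebra.neg_mk, QuaternionAlgebra.mk_mul_mk] <;> norm_num, by ext <;> simp <;> erw [QuaternionAlgebra.neg_mk, QuaternionAlgebra.mk_mul_mk] <;> norm_num⟩

/-- The quaternion `j` as a unit of `ℍ`. -/
noncomputable def quatJ : ℍ[ℝ]ˣ := ⟨⟨0, 0, 1, 0⟩, -⟨0, 0, 1, 0⟩, by ext <;> simp <;> erw [QuaternionAlgebra.neg_mk, QuaternionAlgebra.mk_mul_mk] <;> norm_num, by ext <;> simp <;> erw [QuaternionAlgebra.neg_mk, QuaternionAlgebra.mk_mul_mk] <;> norm_num⟩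

/-- The quaternion `k` as a unit of `ℍ`. -/
noncomputable def quatK : ℍ[ℝ]ˣ := ⟨⟨0, 0, 0, 1⟩, -⟨0, 0, 0, 1⟩, by ext <;> simp <;> erw [QuaternionAlgebra.neg_mk, QuaternionAlgebra.mk_mul_mk] <;> norm_num, by ext <;> simp <;> erw [QuaternionAlgebra.neg_mk, QuaternionAlgebra.mk_mul_mk] <;> norm_num⟩

/-- The 8-element quaternion group `Q₈ = {1, -1, i, -i, j, -j, k, -k}` as a set of
units of `ℍ`. -/
noncomputable def Q8 : Set ℍ[ℝ]ˣ := {1, -1, quatI, -quatI, quatJ, -quatJ, quatK, -quatK}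

/-- The infinite generalized quaternion group `Q_{2^∞}`: the subgroup of `ℍˣ` generated by
the image of `C_{2^∞}` under the embedding `ℂ → ℍ` together with `Q₈`. -/
noncomputable def Q2inf : Subgroup ℍ[ℝ]ˣ :=
  Subgroup.closure ((Units.map complexToQuaternion.toMonoidHom) '' (C2inf : Set ℂˣ) ∪ Q8)

/-- The quasicyclic group `C_{2^∞}` viewed as a subgroup of `ℍˣ` via the embedding `ℂ → ℍ`. -/
noncomputable def C2infH : Subgroup ℍ[ℝ]ˣ :=
  Subgroup.map (Units.map complexToQuaternion.toMonoidHom) C2inf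

/-! In an abelian `p`-group with a unique subgroup of order `p`, the elements killed by `p ^ n`
form the cyclic group generated by any element of order `p ^ n`. If the group is infinite,
elements of every order `p ^ n` exist, and taking successive `p`-th roots yields a tower
`g 0 = 1`, `g (n + 1) ^ p = g n`, `orderOf (g n) = p ^ n`, whose cyclic subgroups exhaust the
group. In such a tower `g a ^ i = g b ^ j` is a congruence between `i` and `j` that does not
depend on the group, so any two towers generate isomorphic groups; in `C_{2^∞}` the roots of
unity `exp (2πi / 2 ^ n)` form one. -/

open Subgroup

section Tower

variable {G H : Type*} [Group G] [Group H] {m : ℕ}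

structure IsPowTower (m : ℕ) (g : ℕ → G) : Prop where
  pow_succ : ∀ n, g (n + 1) ^ m = g n
  orderOf_eq : ∀ n, orderOf (g n) = m ^ n
  exists_zpow_eq : ∀ x, ∃ n, ∃ i : ℤ, g n ^ i = x

namespace IsPowTower

variable {g : ℕ → G} {h : ℕ → H}

lemma pow_pow (hg : IsPowTower m g) (n k : ℕ) : g (n + k) ^ m ^ k = g n := by
  induction k with
  | zero => simp
  | succ k ih => rw [← add_assoc, pow_succ', pow_mul, hg.pow_succ, ih]

lemma zpow_eq_zpow_add (hg : IsPowTower m g) (n k : ℕ) (i : ℤ) :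
    g n ^ i = g (n + k) ^ ((m : ℤ) ^ k * i) := by
  rw [zpow_mul, ← hg.pow_pow n k]
  norm_cast

lemma zpow_eq_zpow_iff (hg : IsPowTower m g) {a b : ℕ} {i j : ℤ} :
    g a ^ i = g b ^ j ↔ (m : ℤ) ^ b * i ≡ m ^ a * j [ZMOD m ^ (a + b)] := by
  rw [hg.zpow_eq_zpow_add a b, hg.zpow_eq_zpow_add b a, add_comm b, zpow_eq_zpow_iff_modEq,
    hg.orderOf_eq]
  push_cast
  rfl

lemma zpow_mul_zpow (hg : IsPowTower m g) (a b : ℕ) (i j : ℤ) :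
    g a ^ i * g b ^ j = g (a + b) ^ ((m : ℤ) ^ b * i + m ^ a * j) := by
  rw [zpow_add, ← hg.zpow_eq_zpow_add, add_comm a, ← hg.zpow_eq_zpow_add]

lemma zpow_eq_zpow_iff_of_isPowTower (hg : IsPowTower m g) (hh : IsPowTower m h) {a b : ℕ}
    {i j : ℤ} : g a ^ i = g b ^ j ↔ h a ^ i = h b ^ j := by
  rw [hg.zpow_eq_zpow_iff, hh.zpow_eq_zpow_iff]

lemma exists_monoidHom (hg : IsPowTower m g) (hh : IsPowTower m h) :
    ∃ φ : G →* H, ∀ n (i : ℤ), φ (g n ^ i) = h n ^ i := by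
  choose level e he using hg.exists_zpow_eq
  have hφ : ∀ n (i : ℤ), h (level (g n ^ i)) ^ e (g n ^ i) = h n ^ i := fun n i =>
    (zpow_eq_zpow_iff_of_isPowTower hg hh).1 (he _)
  refine ⟨{ toFun x := h (level x) ^ e x, map_one' := by simpa using hφ 0 0, map_mul' := ?_ },
    hφ⟩
  intro x y
  obtain ⟨a, i, rfl⟩ := hg.exists_zpow_eq x
  obtain ⟨b, j, rfl⟩ := hg.exists_zpow_eq y
  simp only [hg.zpow_mul_zpow, hh.zpow_mul_zpow, hφ]

theorem nonempty_mulEquiv (hg : IsPowTower m g) (hh : IsPowTower m h) : Nonempty (G ≃* H) := by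
  obtain ⟨φ, hφ⟩ := hg.exists_monoidHom hh
  refine ⟨.ofBijective φ ⟨(injective_iff_map_eq_one φ).2 fun x hx ↦ ?_, fun y ↦ ?_⟩⟩
  · obtain ⟨n, i, rfl⟩ := hg.exists_zpow_eq x
    rw [hφ, ← zpow_zero (h 0)] at hx
    rw [(zpow_eq_zpow_iff_of_isPowTower hg hh).2 hx, zpow_zero]
  · obtain ⟨n, i, rfl⟩ := hh.exists_zpow_eq y
    exact ⟨_, hφ n i⟩

end IsPowTower

end Tower

section UniqueSubgroupOfOrderP

variable {p : ℕ} [hp : Fact p.Prime]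

lemma orderOf_pow_prime_pow {M : Type*} [Monoid M] {x : M} {a b : ℕ}
    (hx : orderOf x = p ^ (a + b)) : orderOf (x ^ p ^ a) = p ^ b := by
  rw [orderOf_pow_of_dvd (pow_ne_zero _ hp.out.ne_zero)
      (hx ▸ pow_dvd_pow p (Nat.le_add_right a b)),
    hx, pow_add, Nat.mul_div_cancel_left _ (pow_pos hp.out.pos a)]

lemma orderOf_pow_prime {M : Type*} [Monoid M] {x : M} {n : ℕ}
    (hx : orderOf x = p ^ (n + 1)) : orderOf (x ^ p) = p ^ n := by
  simpa using orderOf_pow_prime_pow (a := 1) (by rwa [add_comm] at hx)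

variable {G : Type*}

lemma IsPGroup.mul_orderOf_pow_prime [Group G] (hG : IsPGroup p G) {z : G} (hz : z ≠ 1) :
    p * orderOf (z ^ p) = orderOf z := by
  obtain ⟨k, hk⟩ := IsPGroup.iff_orderOf.1 hG z
  have hk0 : k ≠ 0 := by rintro rfl; exact hz (orderOf_eq_one_iff.1 (by simpa using hk))
  obtain ⟨k, rfl⟩ := Nat.exists_eq_add_one_of_ne_zero hk0
  rw [orderOf_pow_prime hk, hk, pow_succ']

lemma mem_zpowers_of_orderOf_eq_prime [Group G] (huniq : ∃! H : Subgroup G, Nat.card H = p)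
    {x y : G} (hx : orderOf x = p) (hy : y ^ p = 1) : y ∈ zpowers x := by
  rcases eq_or_ne y 1 with rfl | hy1
  · exact one_mem _
  have hcard : ∀ z : G, orderOf z = p → Nat.card (zpowers z) = p := fun z hz ↦ by
    rw [Nat.card_zpowers, hz]
  rw [huniq.unique (hcard x hx) (hcard y (orderOf_eq_prime hy hy1))]
  exact mem_zpowers y

lemma mem_zpowers_of_orderOf_eq_pow [CommGroup G] (huniq : ∃! H : Subgroup G, Nat.card H = p) :
    ∀ {n : ℕ} {x y : G}, orderOf x = p ^ n → y ^ p ^ n = 1 → y ∈ zpowers x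
  | 0, x, y, _, hy => by simp_all
  | n + 1, x, y, hx, hy => by
    -- `y ^ p` is a power of `x ^ p`, and the error term has order dividing `p`
    have hxp : orderOf (x ^ p) = p ^ n := orderOf_pow_prime hx
    obtain ⟨k, hk⟩ := mem_zpowers_iff.1 <|
      mem_zpowers_of_orderOf_eq_pow huniq hxp (y := y ^ p) (by rwa [← pow_mul, ← pow_succ'])
    have hxk : (x ^ k) ^ p = y ^ p := by
      rw [← hk, ← zpow_natCast, ← zpow_natCast, ← zpow_mul, ← zpow_mul, mul_comm]
    have hquot : (y * (x ^ k)⁻¹) ^ p = 1 := by rw [mul_pow, inv_pow, hxk, mul_inv_cancel]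
    have hquot_mem : y * (x ^ k)⁻¹ ∈ zpowers x :=
      zpowers_le.2 (npow_mem_zpowers x _) <|
        mem_zpowers_of_orderOf_eq_prime huniq
          (by simpa using orderOf_pow_prime_pow (b := 1) hx) hquot
    simpa using mul_mem hquot_mem (zpow_mem (mem_zpowers x) k)

variable [CommGroup G] [Infinite G]

lemma exists_orderOf_eq_prime_pow (huniq : ∃! H : Subgroup G, Nat.card H = p)
    (hG : IsPGroup p G) : ∀ n : ℕ, ∃ x : G, orderOf x = p ^ n
  | 0 => ⟨1, by simp⟩
  | n + 1 => by
    obtain ⟨x, hx⟩ := exists_orderOf_eq_prime_pow huniq hG n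
    obtain ⟨y, hy⟩ :=
      (orderOf_pos_iff.1 (hx ▸ pow_pos hp.out.pos n)).finite_zpowers.exists_notMem
    obtain ⟨k, hk⟩ := IsPGroup.iff_orderOf.1 hG y
    have hnk : n + 1 ≤ k := by
      by_contra! hkn
      exact hy <| mem_zpowers_of_orderOf_eq_pow huniq hx <| orderOf_dvd_iff_pow_eq_one.1 <|
        hk ▸ pow_dvd_pow p (Nat.lt_succ_iff.1 hkn)
    obtain ⟨d, rfl⟩ := Nat.exists_eq_add_of_le' hnk
    exact ⟨y ^ p ^ d, orderOf_pow_prime_pow hk⟩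

lemma exists_pow_prime_eq (huniq : ∃! H : Subgroup G, Nat.card H = p) (hG : IsPGroup p G)
    (x : G) : ∃ z : G, z ^ p = x ∧ orderOf z = p * orderOf x := by
  rcases eq_or_ne x 1 with rfl | hx1
  · obtain ⟨z, hz⟩ := exists_orderOf_eq_prime_pow huniq hG 1
    exact ⟨z, by rw [← pow_one p, ← hz, pow_orderOf_eq_one], by simpa using hz⟩
  obtain ⟨n, hn⟩ := IsPGroup.iff_orderOf.1 hG x
  obtain ⟨y, hy⟩ := exists_orderOf_eq_prime_pow huniq hG (n + 1)
  obtain ⟨k, hk⟩ := mem_zpowers_iff.1 <|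
    mem_zpowers_of_orderOf_eq_pow huniq (orderOf_pow_prime hy) (hn ▸ pow_orderOf_eq_one x)
  have hroot : (y ^ k) ^ p = x := by
    rw [← hk, ← zpow_natCast, ← zpow_natCast, ← zpow_mul, ← zpow_mul, mul_comm]
  refine ⟨y ^ k, hroot, ?_⟩
  rw [← hG.mul_orderOf_pow_prime (fun h ↦ hx1 (by rw [← hroot, h, one_pow])), hroot]

lemma exists_isPowTower (huniq : ∃! H : Subgroup G, Nat.card H = p) (hG : IsPGroup p G) :
    ∃ g : ℕ → G, IsPowTower p g := by
  choose root root_pow orderOf_root using exists_pow_prime_eq huniq hG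
  have orderOf_iterate (n : ℕ) : orderOf (root^[n] 1) = p ^ n := by
    induction n with
    | zero => simp
    | succ n ih => rw [Function.iterate_succ_apply', orderOf_root, ih, pow_succ']
  refine ⟨fun n ↦ root^[n] 1, fun n ↦ ?_, orderOf_iterate, fun x ↦ ?_⟩
  · rw [Function.iterate_succ_apply', root_pow]
  · obtain ⟨n, hn⟩ := IsPGroup.iff_orderOf.1 hG x
    obtain ⟨i, hi⟩ := mem_zpowers_iff.1 <|
      mem_zpowers_of_orderOf_eq_pow huniq (orderOf_iterate n) (hn ▸ pow_orderOf_eq_one x)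
    exact ⟨n, i, hi⟩

end UniqueSubgroupOfOrderP

noncomputable def primitiveRootTwoPow (n : ℕ) : ℂˣ :=
  Units.mk0 (Complex.exp (2 * Real.pi * Complex.I / 2 ^ n)) (Complex.exp_ne_zero _)

lemma isPrimitiveRoot_primitiveRootTwoPow (n : ℕ) :
    IsPrimitiveRoot (primitiveRootTwoPow n) (2 ^ n) := by
  rw [← IsPrimitiveRoot.coe_units_iff, primitiveRootTwoPow, Units.val_mk0]
  exact_mod_cast Complex.isPrimitiveRoot_exp (2 ^ n) (by positivity)

lemma primitiveRootTwoPow_succ_sq (n : ℕ) :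
    primitiveRootTwoPow (n + 1) ^ 2 = primitiveRootTwoPow n := by
  ext
  rw [Units.val_pow_eq_pow_val, primitiveRootTwoPow, primitiveRootTwoPow, Units.val_mk0,
    Units.val_mk0, ← Complex.exp_nat_mul]
  congr 1
  push_cast
  field_simp
  ring

noncomputable def C2inf.primitiveRoot (n : ℕ) : C2inf :=
  ⟨primitiveRootTwoPow n, by exact ⟨n, (isPrimitiveRoot_primitiveRootTwoPow n).pow_eq_one⟩⟩

lemma C2inf.isPowTower_primitiveRoot : IsPowTower 2 C2inf.primitiveRoot where
  pow_succ n := Subtype.ext (primitiveRootTwoPow_succ_sq n)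
  orderOf_eq n := by
    rw [← orderOf_coe]
    exact (isPrimitiveRoot_primitiveRootTwoPow n).eq_orderOf.symm
  exists_zpow_eq := by
    rintro ⟨z, n, hz⟩
    have hmem : z ∈ zpowers (primitiveRootTwoPow n) := by
      rw [(isPrimitiveRoot_primitiveRootTwoPow n).zpowers_eq]
      exact hz
    obtain ⟨i, hi⟩ := mem_zpowers_iff.1 hmem
    exact ⟨n, i, Subtype.ext hi⟩

/-- Each infinite abelian 2-group with a unique 2-element subgroup is isomorphic to the
quasicyclic 2-group `C_{2^∞}`. -/
theorem stmt_3 (G : Type*) [Group G] [Infinite G] (hab : ∀ x y : G, x * y = y * x)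
    (hG : IsPGroup 2 G) (huniq : ∃! H : Subgroup G, Nat.card H = 2) :
    Nonempty (G ≃* C2inf) := by
  let : CommGroup G := { ‹Group G› with mul_comm := hab }
  obtain ⟨g, hg⟩ := exists_isPowTower huniq hG
  exact hg.nonempty_mulEquiv C2inf.isPowTower_primitiveRoot
end

section
/- Let G be a group and a, b ∈ G elements such that: (1) b² lies in the cyclic subgroup ⟨a⟩ generated by a; (2) a²b lies in the left coset b·⟨a⟩; and (3) both a and ab have finite order. Then the subgroup ⟨a, b⟩ of G generated by a and b is finite. -/
open Pointwise

/-- If `b² ∈ ⟨a⟩`, `a²b ∈ b⟨a⟩` and the elements `a` and `ab` have finite order, then the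
subgroup `⟨a, b⟩` generated by `a` and `b` is finite. -/
theorem stmt_4 {G : Type*} [Group G] (a b : G)
    (h1 : b ^ 2 ∈ Subgroup.zpowers a)
    (h2 : a ^ 2 * b ∈ b • (Subgroup.zpowers a : Set G))
    (h3a : IsOfFinOrder a) (h3b : IsOfFinOrder (a * b)) :
    Finite (Subgroup.closure {a, b} : Subgroup G) := by
  rw [Subgroup.mem_zpowers_iff] at h1
  obtain ⟨m0, hm0⟩ := h1
  rw [Set.mem_smul_set] at h2
  obtain ⟨x, hx, hxe⟩ := h2
  rw [SetLike.mem_coe, Subgroup.mem_zpowers_iff] at hx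
  obtain ⟨k, hk⟩ := hx
  obtain ⟨c, hc⟩ : ∃ c : G, c = a * b := ⟨a * b, rfl⟩
  rw [← hc] at h3b
  have hab : a ^ (2:ℤ) * b = b * a ^ k := by
    have h := hxe
    rw [smul_eq_mul, ← hk] at h
    rw [show ((2:ℤ)) = ((2:ℕ):ℤ) by norm_num, zpow_natCast]
    exact h.symm
  -- conjugation of even powers of a by b
  have key2 : ∀ q : ℤ, a ^ (2 * q) * b = b * a ^ (k * q) := by
    intro q
    have h2' : a ^ (2:ℤ) = b * a ^ k * b⁻¹ := by rw [← hab]; group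
    have h3 : a ^ (2 * q) = b * a ^ (k * q) * b⁻¹ := by
      rw [zpow_mul, h2', zpow_mul]
      rw [show ∀ y : G, (b * y * b⁻¹) ^ q = b * y ^ q * b⁻¹ from fun y => by
        simpa using (map_zpow (MulAut.conj b) y q).symm]
    rw [h3]; group
  have lem_ab : ∀ i : ℤ, (∃ j : ℤ, a ^ i * b = b * a ^ j) ∨ (∃ j : ℤ, a ^ i * b = c * a ^ j) := by
    intro i
    rcases Int.even_or_odd i with ⟨q, hq⟩ | ⟨q, hq⟩
    · left
      exact ⟨k * q, by rw [hq, show q + q = 2 * q by ring, key2]⟩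
    · right
      refine ⟨k * q, ?_⟩
      have h4 : a ^ i = a * a ^ (2 * q) := by
        rw [hq, show 2 * q + 1 = 1 + 2 * q by ring, zpow_add, zpow_one]
      rw [h4, mul_assoc, key2, hc]; group
  have hbb : b * b = a ^ m0 := by rw [← pow_two, ← hm0]
  have hcb : c * b = a ^ (m0 + 1) := by
    rw [hc, mul_assoc, hbb, zpow_add, zpow_one]; group
  -- step lemma : a^i * c = a^(i+1) * b
  have hstep : ∀ i : ℤ, a ^ i * c = a ^ (i + 1) * b := by
    intro i
    rw [hc, zpow_add, zpow_one]; group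
  -- the master reduction lemma
  have Q : ∀ t : ℕ, ∀ i : ℤ, ∃ ε s : ℕ, ∃ j : ℤ,
      ε ≤ 1 ∧ s ≤ t ∧ a ^ i * c ^ t = b ^ ε * c ^ s * a ^ j := by
    intro t
    induction t using Nat.strong_induction_on with
    | _ t ih =>
      cases t with
      | zero => exact fun i => ⟨0, 0, i, by simp⟩
      | succ u =>
        intro i
        have hsplit : a ^ i * c ^ (u+1) = (a ^ (i+1) * b) * c ^ u := by
          rw [pow_succ', ← mul_assoc, hstep]
        rcases lem_ab (i+1) with ⟨j, hj⟩ | ⟨j, hj⟩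
        · obtain ⟨ε, s, j', hε, hs, he⟩ := ih u (Nat.lt_succ_self u) j
          rcases Nat.le_one_iff_eq_zero_or_eq_one.mp hε with rfl | rfl
          · refine ⟨1, s, j', le_refl 1, hs.trans (Nat.le_succ u), ?_⟩
            rw [hsplit, hj, mul_assoc, he]
            simp [mul_assoc]
          · obtain ⟨ε2, s2, j2, hε2, hs2, he2⟩ := ih s (Nat.lt_succ_of_le hs) m0
            refine ⟨ε2, s2, j2 + j', hε2, hs2.trans (hs.trans (Nat.le_succ u)), ?_⟩
            rw [hsplit, hj, mul_assoc, he, pow_one, show b * (b * c ^ s * a ^ j')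
              = (a ^ m0 * c ^ s) * a ^ j' by rw [← hbb]; group, he2, zpow_add]
            group
        · obtain ⟨ε, s, j', hε, hs, he⟩ := ih u (Nat.lt_succ_self u) j
          rcases Nat.le_one_iff_eq_zero_or_eq_one.mp hε with rfl | rfl
          · refine ⟨0, s + 1, j', by norm_num, by omega, ?_⟩
            rw [hsplit, hj, mul_assoc, he, pow_succ']
            simp [mul_assoc]
          · obtain ⟨ε2, s2, j2, hε2, hs2, he2⟩ := ih s (Nat.lt_succ_of_le hs) (m0+1)
            refine ⟨ε2, s2, j2 + j', hε2, by omega, ?_⟩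
            rw [hsplit, hj, mul_assoc, he, pow_one, show c * (b * c ^ s * a ^ j')
              = (a ^ (m0+1) * c ^ s) * a ^ j' by rw [← hcb]; group, he2, zpow_add]
            group
  -- the candidate carrier set
  set S : Set G := {x | ∃ ε s : ℕ, ∃ j : ℤ, ε ≤ 1 ∧ x = b ^ ε * c ^ s * a ^ j} with hS
  have mul_a : ∀ x ∈ S, ∀ j : ℤ, x * a ^ j ∈ S := by
    rintro x ⟨ε, s, j0, hε, rfl⟩ j
    exact ⟨ε, s, j0 + j, hε, by rw [zpow_add]; group⟩
  -- closure under right multiplication by powers of c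
  have mulc : ∀ n t ε s : ℕ, ∀ i : ℤ, ε ≤ 1 → s + t ≤ n →
      b ^ ε * c ^ s * a ^ i * c ^ t ∈ S := by
    intro n
    induction n with
    | zero =>
      intro t ε s i hε hn
      have ht : t = 0 := by omega
      exact ⟨ε, s, i, hε, by rw [ht]; group⟩
    | succ n ihn =>
      intro t ε s i hε hn
      obtain ⟨ε1, s1, j1, hε1, hs1, he1⟩ := Q t i
      have hrw : b ^ ε * c ^ s * a ^ i * c ^ t = b ^ ε * c ^ s * (b ^ ε1 * c ^ s1 * a ^ j1) := by
        rw [show b ^ ε * c ^ s * a ^ i * c ^ t = b ^ ε * c ^ s * (a ^ i * c ^ t) by group, he1]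
      rcases Nat.le_one_iff_eq_zero_or_eq_one.mp hε1 with rfl | rfl
      · exact ⟨ε, s + s1, j1, hε, by rw [hrw, pow_add]; group⟩
      · cases s with
        | zero =>
          rcases Nat.le_one_iff_eq_zero_or_eq_one.mp hε with rfl | rfl
          · exact ⟨1, s1, j1, le_refl 1, by rw [hrw]; group⟩
          · obtain ⟨ε2, s2, j2, hε2, hs2, he2⟩ := Q s1 m0
            refine ⟨ε2, s2, j2 + j1, hε2, ?_⟩
            rw [hrw, show b ^ 1 * c ^ 0 * (b ^ 1 * c ^ s1 * a ^ j1)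
              = ((b * b) * c ^ s1) * a ^ j1 by group, hbb, he2, zpow_add]
            group
        | succ u =>
          have hmem := ihn s1 ε u (m0 + 1) hε (by omega)
          have heq : b ^ ε * c ^ (u+1) * a ^ i * c ^ t
              = (b ^ ε * c ^ u * a ^ (m0+1) * c ^ s1) * a ^ j1 := by
            rw [hrw, show b ^ ε * c ^ (u+1) * (b ^ 1 * c ^ s1 * a ^ j1)
              = b ^ ε * c ^ u * ((c * b) * c ^ s1) * a ^ j1 by rw [pow_succ]; group, hcb]
            group
          rw [heq]
          exact mul_a _ hmem j1
  have mul_b : ∀ x ∈ S, x * b ∈ S := by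
    rintro x ⟨ε, s, i, hε, rfl⟩
    have hrw : ∀ y : G, a ^ i * b = y → b ^ ε * c ^ s * a ^ i * b = b ^ ε * c ^ s * y := by
      intro y hy; rw [← hy]; group
    rcases lem_ab i with ⟨j, hj⟩ | ⟨j, hj⟩
    · cases s with
      | zero =>
        rcases Nat.le_one_iff_eq_zero_or_eq_one.mp hε with rfl | rfl
        · exact ⟨1, 0, j, le_refl 1, by rw [hrw _ hj]; group⟩
        · refine ⟨0, 0, m0 + j, by norm_num, ?_⟩
          rw [hrw _ hj, show b ^ 1 * c ^ 0 * (b * a ^ j) = (b * b) * a ^ j by group,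
            hbb, zpow_add]
          group
      | succ u =>
        refine ⟨ε, u, m0 + 1 + j, hε, ?_⟩
        rw [hrw _ hj, show b ^ ε * c ^ (u+1) * (b * a ^ j)
          = b ^ ε * c ^ u * (c * b) * a ^ j by rw [pow_succ]; group, hcb, zpow_add]
        group
    · exact ⟨ε, s + 1, j, hε, by rw [hrw _ hj, pow_succ]; group⟩
  have one_mem' : (1:G) ∈ S := ⟨0, 0, 0, by norm_num, by simp⟩
  have mul_mem' : ∀ x ∈ S, ∀ y ∈ S, x * y ∈ S := by
    rintro x hx y ⟨δ, t, l, hδ, rfl⟩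
    have h1 : x * b ^ δ ∈ S := by
      rcases Nat.le_one_iff_eq_zero_or_eq_one.mp hδ with rfl | rfl
      · simpa using hx
      · simpa using mul_b x hx
    obtain ⟨ε, s, i, hε, he⟩ := h1
    have h2 : x * b ^ δ * c ^ t ∈ S := by rw [he]; exact mulc (s + t) t ε s i hε (le_refl _)
    have h3 := mul_a _ h2 l
    simpa [mul_assoc] using h3
  have inv_mem' : ∀ x ∈ S, x⁻¹ ∈ S := by
    rintro x ⟨ε, s, i, hε, rfl⟩
    obtain ⟨M, hM, hcM⟩ := h3b.exists_pow_eq_one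
    have hcinv : (c ^ s)⁻¹ = c ^ (s * (M - 1)) := by
      rw [inv_eq_iff_mul_eq_one, ← pow_add]
      have hMM : s + s * (M - 1) = M * s := by
        cases M with
        | zero => omega
        | succ m => simp only [Nat.add_sub_cancel]; ring
      rw [hMM, pow_mul, hcM, one_pow]
    have hbinv : (b ^ ε)⁻¹ ∈ S := by
      rcases Nat.le_one_iff_eq_zero_or_eq_one.mp hε with rfl | rfl
      · simpa using one_mem'
      · have hb1 : (b ^ 1)⁻¹ = a ^ (-m0) * b := by
          have hn : a ^ (-m0) = (b * b)⁻¹ := by rw [hbb, zpow_neg]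
          rw [pow_one, hn]; group
        rw [hb1]
        exact mul_b _ ⟨0, 0, -m0, by norm_num, by group⟩
    have hrw : (b ^ ε * c ^ s * a ^ i)⁻¹ = a ^ (-i) * c ^ (s * (M-1)) * (b ^ ε)⁻¹ := by
      rw [← hcinv]; group
    rw [hrw]
    exact mul_mem' _ (mul_mem' _ ⟨0, 0, -i, by norm_num, by group⟩ _
      ⟨0, s * (M-1), 0, by norm_num, by group⟩) _ hbinv
  -- S is finite
  have hSfin : S.Finite := by
    have hfin : (({1, b} : Set G) * (Subgroup.zpowers c : Set G)
        * (Subgroup.zpowers a : Set G)).Finite :=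
      (((Set.finite_singleton b).insert 1).mul h3b.finite_zpowers).mul h3a.finite_zpowers
    refine hfin.subset ?_
    rintro x ⟨ε, s, i, hε, rfl⟩
    refine Set.mul_mem_mul (Set.mul_mem_mul ?_ ?_) ?_
    · rcases Nat.le_one_iff_eq_zero_or_eq_one.mp hε with rfl | rfl
      · simp
      · simp
    · exact ⟨(s:ℤ), by simp [zpow_natCast]⟩
    · exact ⟨i, rfl⟩
  -- conclude
  have hsub : (Subgroup.closure {a, b} : Set G) ⊆ S := by
    intro x hx
    induction hx using Subgroup.closure_induction with
    | mem y hy =>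
      rcases hy with rfl | rfl
      · exact ⟨0, 0, 1, by norm_num, by group⟩
      · exact ⟨1, 0, 0, le_refl 1, by group⟩
    | one => exact one_mem'
    | mul y z _ _ hy hz => exact mul_mem' _ hy _ hz
    | inv y _ hy => exact inv_mem' _ hy
  exact Set.Finite.to_subtype (hSfin.subset hsub)
end

section
/- Let G be an infinite non-abelian 2-group (every element has order a power of 2) with a unique element of order 2. Then G contains an element of order 8. -/
/-- An infinite non-abelian 2-group with a unique element of order 2 contains an element
of order 8. -/
theorem stmt_5 (G : Type*) [Group G] [Infinite G] (hG : IsPGroup 2 G)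
    (hna : ∃ x y : G, x * y ≠ y * x) (huniq : ∃! x : G, orderOf x = 2) :
    ∃ x : G, orderOf x = 8 := by
  classical
  by_contra h8
  push_neg at h8
  obtain ⟨z, hz2, hzuniq⟩ := huniq
  obtain ⟨x, y, hxy⟩ := hna
  have hz1 : z ≠ 1 := by
    intro h; rw [h, orderOf_one] at hz2; omega
  have hzz : z * z = 1 := by
    have := pow_orderOf_eq_one z
    rwa [hz2, pow_two] at this
  have hzinv : z⁻¹ = z := inv_eq_of_mul_eq_one_right hzz
  -- every element satisfies g^4 = 1
  have hord : ∀ g : G, g ^ 4 = 1 := by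
    intro g
    obtain ⟨k, hk⟩ := hG g
    have hd : orderOf g ∣ 2 ^ k := orderOf_dvd_iff_pow_eq_one.mpr hk
    obtain ⟨j, hjk, hj⟩ := (Nat.dvd_prime_pow Nat.prime_two).mp hd
    rcases le_or_gt j 2 with h | h
    · have hd4 : orderOf g ∣ 4 := by
        rw [hj]
        have h4 : (4 : ℕ) = 2 ^ 2 := by norm_num
        rw [h4]
        exact pow_dvd_pow 2 h
      exact orderOf_dvd_iff_pow_eq_one.mp hd4
    · exfalso
      apply h8 (g ^ 2 ^ (j - 3))
      rw [orderOf_pow' _ (pow_ne_zero _ (by norm_num : (2:ℕ) ≠ 0)), hj]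
      have hgcd : Nat.gcd (2 ^ j) (2 ^ (j - 3)) = 2 ^ (j - 3) :=
        Nat.gcd_eq_right (pow_dvd_pow 2 (by omega))
      rw [hgcd, Nat.pow_div (by omega) (by norm_num)]
      have h3 : j - (j - 3) = 3 := by omega
      rw [h3]
  have hsq1 : ∀ g : G, g * g = 1 → g = 1 ∨ g = z := by
    intro g h
    have hdvd : orderOf g ∣ 2 := orderOf_dvd_iff_pow_eq_one.mpr (by rwa [pow_two])
    rcases (Nat.dvd_prime Nat.prime_two).mp hdvd with h1 | h2
    · exact Or.inl (orderOf_eq_one_iff.mp h1)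
    · exact Or.inr (hzuniq g h2)
  have hsq : ∀ g : G, g * g = 1 ∨ g * g = z := by
    intro g
    apply hsq1
    have h4 : g ^ 4 = g * g * (g * g) := by
      rw [show (4:ℕ) = 2 + 2 from rfl, pow_add, pow_two]
    rw [← h4, hord]
  -- z is central
  have hzc : ∀ g : G, g * z = z * g := by
    intro g
    have h1 : (g * z * g⁻¹) * (g * z * g⁻¹) = 1 := by
      have h2 : (g * z * g⁻¹) * (g * z * g⁻¹) = g * (z * z) * g⁻¹ := by group
      rw [h2, hzz]; group
    rcases hsq1 _ h1 with h | h
    · exfalso; apply hz1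
      have h3 : z = g⁻¹ * (g * z * g⁻¹) * g := by group
      rw [h3, h]; group
    · have h3 : g * z = (g * z * g⁻¹) * g := by group
      rw [h3, h]
  -- key lemma for non-commuting pairs
  have key : ∀ a b : G, a * b ≠ b * a → a * a = z ∧ a * b * a⁻¹ = b * z := by
    intro a b hab
    have ha2 : a * a = z := by
      rcases hsq a with h | h
      · rcases hsq1 a h with h1 | h1
        · exact absurd (by rw [h1, one_mul, mul_one]) hab
        · exact absurd (by rw [h1, hzc]) hab
      · exact h
    have hb2 : b * b = z := by
      rcases hsq b with h | h
      · rcases hsq1 b h with h1 | h1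
        · exact absurd (by rw [h1, one_mul, mul_one]) hab
        · exact absurd (by rw [h1, ← hzc]) hab
      · exact h
    refine ⟨ha2, ?_⟩
    rcases hsq (a * b) with h | h
    · rcases hsq1 _ h with h1 | h1
      · exfalso; apply hab
        have hb : b = a⁻¹ := by
          have := inv_eq_of_mul_eq_one_right h1
          rw [← this]
        rw [hb, mul_inv_cancel, inv_mul_cancel]
      · exfalso; apply hab
        have hb : b = a⁻¹ * z := by
          rw [← h1]; group
        rw [hb]
        calc a * (a⁻¹ * z) = z := by group
          _ = a⁻¹ * (a * z) := by group
          _ = a⁻¹ * (z * a) := by rw [hzc]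
          _ = a⁻¹ * z * a := by group
    · have h3 : a * b * a = b := by
        have h4 : (a * b) * (a * b) = b * b := by rw [h, hb2]
        have h5 : (a * b * a) * b = b * b := by
          rw [← h4]; group
        exact mul_right_cancel h5
      calc a * b * a⁻¹ = (a * b * a) * a⁻¹ * a⁻¹ := by group
        _ = b * a⁻¹ * a⁻¹ := by rw [h3]
        _ = b * (a * a)⁻¹ := by group
        _ = b * z⁻¹ := by rw [ha2]
        _ = b * z := by rw [hzinv]
  obtain ⟨hx2, hxc⟩ := key x y hxy
  -- pick w outside an 8-element set
  obtain ⟨w, hw⟩ := Infinite.exists_notMem_finset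
    ({1, z, x, x * z, y, y * z, x * y, x * y * z} : Finset G)
  simp only [Finset.mem_insert, Finset.mem_singleton, not_or] at hw
  obtain ⟨hw1, hwz, hwx, hwxz, hwy, hwyz, hwxy, hwxyz⟩ := hw
  -- any element commuting with x, not in {1, z}, equals x or x*z
  have main : ∀ v : G, x * v = v * x → v ≠ 1 → v ≠ z → v = x ∨ v = x * z := by
    intro v hcomm hv1 hvz
    have hv2 : v * v = z := by
      rcases hsq v with h | h
      · rcases hsq1 v h with h1 | h1
        · exact absurd h1 hv1
        · exact absurd h1 hvz
      · exact h
    have hxv : (x * v) * (x * v) = 1 := by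
      calc (x * v) * (x * v) = x * (v * x) * v := by group
        _ = x * (x * v) * v := by rw [← hcomm]
        _ = (x * x) * (v * v) := by group
        _ = 1 := by rw [hx2, hv2, hzz]
    have hxinv : x⁻¹ = x * z := by
      have h5 : x * (x * z) = 1 := by rw [← mul_assoc, hx2, hzz]
      exact inv_eq_of_mul_eq_one_right h5
    rcases hsq1 _ hxv with h | h
    · right
      have hv : v = x⁻¹ := by
        have := inv_eq_of_mul_eq_one_right h
        rw [← this]
      rw [hv, hxinv]
    · left
      have hv : v = x⁻¹ * z := by rw [← h]; group
      rw [hv, hxinv, mul_assoc, hzz, mul_one]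
  by_cases hcase : x * w = w * x
  · rcases main w hcase hw1 hwz with h | h
    · exact hwx h
    · exact hwxz h
  · -- w anticommutes with x; use v = w * y⁻¹
    obtain ⟨_, hwc⟩ := key x w hcase
    have hyinvc : x * y⁻¹ * x⁻¹ = y⁻¹ * z := by
      calc x * y⁻¹ * x⁻¹ = (x * y * x⁻¹)⁻¹ := by group
        _ = z⁻¹ * y⁻¹ := by rw [hxc]; group
        _ = z * y⁻¹ := by rw [hzinv]
        _ = y⁻¹ * z := by rw [← hzc]
    have hcomm : x * (w * y⁻¹) = (w * y⁻¹) * x := by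
      have h1 : x * (w * y⁻¹) * x⁻¹ = w * y⁻¹ := by
        calc x * (w * y⁻¹) * x⁻¹ = (x * w * x⁻¹) * (x * y⁻¹ * x⁻¹) := by group
          _ = w * z * (y⁻¹ * z) := by rw [hwc, hyinvc]
          _ = w * z * (z * y⁻¹) := by rw [hzc y⁻¹]
          _ = w * (z * (z * y⁻¹)) := by rw [mul_assoc]
          _ = w * (z * z * y⁻¹) := by rw [← mul_assoc z z]
          _ = w * y⁻¹ := by rw [hzz, one_mul]
      calc x * (w * y⁻¹) = (x * (w * y⁻¹) * x⁻¹) * x := by group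
        _ = (w * y⁻¹) * x := by rw [h1]
    have hv1 : w * y⁻¹ ≠ 1 := by
      intro h
      apply hwy
      calc w = (w * y⁻¹) * y := by group
        _ = y := by rw [h, one_mul]
    have hvz : w * y⁻¹ ≠ z := by
      intro h
      apply hwyz
      calc w = (w * y⁻¹) * y := by group
        _ = z * y := by rw [h]
        _ = y * z := by rw [← hzc]
    rcases main _ hcomm hv1 hvz with h | h
    · apply hwxy
      calc w = (w * y⁻¹) * y := by group
        _ = x * y := by rw [h]
    · apply hwxyz
      calc w = (w * y⁻¹) * y := by group
        _ = x * z * y := by rw [h]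
        _ = x * (z * y) := by group
        _ = x * (y * z) := by rw [hzc]
        _ = x * y * z := by group
end

section
/- Let G be an infinite non-abelian 2-group (every element has order a power of 2) with a unique element of order 2, and let F = {x ∈ G : orderOf x = 4}. Let A be a maximal abelian subgroup of G with more than 4 elements, and let b ∈ F with b ∉ A. Then F \ A = b·A, i.e. the set of order-4 elements outside A coincides with the left coset {b·a : a ∈ A}. -/
/-!
Let `z` be the unique involution. It is central, and the elements of order 4 are exactly the
square roots of `z`, so two commuting ones agree up to inversion; hence an abelian subgroup with
more than 4 elements contains an element `h` of order 8. The heart of the argument is that the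
square of an element of order 8 never inverts another element `s` of order 8: otherwise
`h * h` and `s * s` generate a quaternion group on whose three cyclic subgroups of order 4
conjugation by `h * s` acts as a 3-cycle, which is impossible in a 2-group. It follows that every
element of order 4 outside `A` inverts `h * h`, and then, by induction on the order, all of `A`.
So for such `x` the element `b⁻¹ * x` centralizes `A` and lies in `A` by maximality; conversely
every `b * a` with `a ∈ A` squares to `z`.
-/

open Pointwise

section

variable {G : Type*} [Group G]

theorem conj_eq_mul_inv_of_conj_eq_inv {a b : G} (h : a * b * a⁻¹ = b⁻¹) :
    b * a * b⁻¹ = a * (b * b)⁻¹ :=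
  calc b * a * b⁻¹ = (a * b * a⁻¹)⁻¹ * a * b⁻¹ := by rw [h, inv_inv]
    _ = a * (b * b)⁻¹ := by group

theorem conj_inv_mul_eq_inv_of_mul_self_eq {g k : G} (h : g * g = k * k) :
    g * (g⁻¹ * k) * g⁻¹ = (g⁻¹ * k)⁻¹ :=
  calc g * (g⁻¹ * k) * g⁻¹ = k⁻¹ * (k * k) * (g * g)⁻¹ * g := by group
    _ = (g⁻¹ * k)⁻¹ := by rw [h]; group

theorem commute_inv_mul_of_conj_eq_inv {x y a : G} (hx : x * a * x⁻¹ = a⁻¹)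
    (hy : y * a * y⁻¹ = a⁻¹) : Commute (x⁻¹ * y) a := by
  have hx' : x⁻¹ * a⁻¹ * x = a := by rw [← hx]; group
  calc x⁻¹ * y * a = x⁻¹ * (y * a * y⁻¹) * x * (x⁻¹ * y) := by group
    _ = a * (x⁻¹ * y) := by rw [hy, hx']

theorem mem_of_forall_commute_of_maximal {A : Subgroup G} (hA : IsMulCommutative A)
    (hmax : ∀ B : Subgroup G, IsMulCommutative B → A ≤ B → B = A) {y : G}
    (hy : ∀ a ∈ A, Commute y a) : y ∈ A := by
  have hcomm : ∀ p ∈ insert y (A : Set G), ∀ q ∈ insert y (A : Set G), p * q = q * p := by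
    rintro p (rfl | hp) q (rfl | hq)
    · rfl
    · exact hy q hq
    · exact (hy p hp).symm
    · exact setLike_mul_comm hp hq
  have hB := hmax _ (Subgroup.isMulCommutative_closure hcomm)
    fun a ha => Subgroup.subset_closure (Set.mem_insert_of_mem y ha)
  exact hB ▸ Subgroup.subset_closure (Set.mem_insert y _)

namespace IsPGroup

variable {p : ℕ} [Fact p.Prime]

theorem orderOf_ne_zero (hG : IsPGroup p G) (g : G) : orderOf g ≠ 0 := by
  obtain ⟨k, hk⟩ := hG.exists_orderOf_eq_pow g
  exact hk ▸ pow_ne_zero k (Fact.out : p.Prime).ne_zero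

theorem orderOf_dvd_pow_or_pow_dvd_orderOf (hG : IsPGroup p G) (g : G) (n : ℕ) :
    orderOf g ∣ p ^ n ∨ p ^ (n + 1) ∣ orderOf g := by
  obtain ⟨k, hk⟩ := hG.exists_orderOf_eq_pow g
  rw [hk]
  rcases le_or_gt k n with hkn | hkn
  · exact Or.inl (pow_dvd_pow p hkn)
  · exact Or.inr (pow_dvd_pow p hkn)

theorem commute_of_commute_pow (hG : IsPGroup p G) {t u : G} {n : ℕ} (hn : n.Coprime p)
    (h : Commute (t ^ n) u) : Commute t u := by
  obtain ⟨k, hk⟩ := hG.exists_orderOf_eq_pow t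
  obtain ⟨m, hm⟩ := exists_pow_eq_self_of_coprime (hk ▸ hn.pow_right k : n.Coprime (orderOf t))
  exact hm ▸ h.pow_left m

theorem eq_of_conj_three_cycle (hG : IsPGroup p G) (hp : Nat.Coprime 3 p) {t u v w : G}
    (huv : t * u * t⁻¹ = v) (hvw : t * v * t⁻¹ = w) (hwu : t * w * t⁻¹ = u) : v = u := by
  have ht3 : Commute (t ^ 3) u := by
    refine mul_inv_eq_iff_eq_mul.mp ?_
    calc t ^ 3 * u * (t ^ 3)⁻¹ = t * (t * (t * u * t⁻¹) * t⁻¹) * t⁻¹ := by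
          simp only [pow_succ, pow_zero, one_mul, mul_inv_rev, mul_assoc]
      _ = u := by rw [huv, hvw, hwu]
  rw [← huv, (hG.commute_of_commute_pow hp ht3).eq, mul_inv_cancel_right]

end IsPGroup

def IsUniqueInvolution (z : G) : Prop := ∀ w : G, orderOf w = 2 ↔ w = z

namespace IsUniqueInvolution

variable {z : G}

theorem orderOf_eq (hz : IsUniqueInvolution z) : orderOf z = 2 := (hz z).mpr rfl

theorem mul_self (hz : IsUniqueInvolution z) : z * z = 1 := by
  rw [← sq, ← hz.orderOf_eq, pow_orderOf_eq_one]

theorem ne_one (hz : IsUniqueInvolution z) : z ≠ 1 := fun h => by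
  simpa [h] using hz.orderOf_eq

theorem commute (hz : IsUniqueInvolution z) (g : G) : Commute z g := by
  have hconj : g * z * g⁻¹ = z :=
    (hz _).mp (by rw [← MulAut.conj_apply, MulEquiv.orderOf_eq, hz.orderOf_eq])
  exact (mul_inv_eq_iff_eq_mul.mp hconj).symm

theorem eq_one_or_eq_of_mul_self_eq_one (hz : IsUniqueInvolution z) {w : G} (h : w * w = 1) :
    w = 1 ∨ w = z :=
  or_iff_not_imp_left.mpr fun hw => (hz w).mp (orderOf_eq_prime (by rw [sq, h]) hw)

theorem pow_eq_of_orderOf_eq_two_mul (hz : IsUniqueInvolution z) {g : G} {n : ℕ} (hn : n ≠ 0)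
    (hg : orderOf g = 2 * n) : g ^ n = z := by
  refine (hz _).mp ?_
  rw [orderOf_pow_of_dvd hn (hg ▸ dvd_mul_left n 2), hg,
    Nat.mul_div_cancel _ (Nat.pos_of_ne_zero hn)]

theorem orderOf_eq_four_iff (hz : IsUniqueInvolution z) {x : G} : orderOf x = 4 ↔ x * x = z := by
  refine ⟨fun hx => ?_, fun hx => ?_⟩
  · rw [← sq]; exact hz.pow_eq_of_orderOf_eq_two_mul two_ne_zero hx
  · refine orderOf_eq_prime_pow (p := 2) (n := 1) ?_ ?_
    · rw [pow_one, sq, hx]; exact hz.ne_one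
    · rw [show (2 : ℕ) ^ (1 + 1) = 2 + 2 from rfl, pow_add, sq, hx, hz.mul_self]

theorem eq_or_eq_inv_of_commute (hz : IsUniqueInvolution z) {x y : G} (hx : x * x = z)
    (hy : y * y = z) (h : Commute x y) : y = x ∨ y = x⁻¹ := by
  have hsq : (x * y⁻¹) * (x * y⁻¹) = 1 :=
    calc (x * y⁻¹) * (x * y⁻¹) = (x * x) * (y⁻¹ * y⁻¹) :=
          h.inv_right.symm.mul_mul_mul_comm x y⁻¹
      _ = (x * x) * (y * y)⁻¹ := by group
      _ = 1 := by rw [hx, hy, mul_inv_cancel]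
  rcases hz.eq_one_or_eq_of_mul_self_eq_one hsq with h1 | h1
  · exact Or.inl (mul_inv_eq_one.mp h1).symm
  · right
    calc y = (x * y⁻¹)⁻¹ * x := by group
      _ = (x * x)⁻¹ * x := by rw [h1, hx]
      _ = x⁻¹ := by group

theorem eq_one_or_eq_or_mul_self_eq_or_eight_dvd (hz : IsUniqueInvolution z)
    (hG : IsPGroup 2 G) (a : G) : a = 1 ∨ a = z ∨ a * a = z ∨ 8 ∣ orderOf a := by
  rcases hG.orderOf_dvd_pow_or_pow_dvd_orderOf a 2 with h4 | h8
  · have hsq : (a * a) * (a * a) = 1 := by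
      rw [← orderOf_dvd_iff_pow_eq_one.mp h4]; simp [pow_succ, mul_assoc]
    rcases hz.eq_one_or_eq_of_mul_self_eq_one hsq with h1 | h1
    · exact (hz.eq_one_or_eq_of_mul_self_eq_one h1).imp_right Or.inl
    · exact Or.inr (Or.inr (Or.inl h1))
  · exact Or.inr (Or.inr (Or.inr h8))

theorem mul_self_mul_mul_self_eq (hz : IsUniqueInvolution z) {h : G} (hh : orderOf h = 8) :
    h * h * (h * h) = z := by
  rw [← hz.pow_eq_of_orderOf_eq_two_mul (n := 4) (by norm_num) hh]
  simp [pow_succ, mul_assoc]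

theorem mul_self_eq_one_of_conj_eq_inv (hz : IsUniqueInvolution z) (hG : IsPGroup 2 G)
    {g d : G} (hg : 8 ∣ orderOf g) (h : g * d * g⁻¹ = d⁻¹) : d * d = 1 := by
  by_contra hd
  have hd4 : 4 ∣ orderOf d := by
    refine (hG.orderOf_dvd_pow_or_pow_dvd_orderOf d 1).resolve_left fun h2 => hd ?_
    rw [← sq]; exact orderOf_dvd_iff_pow_eq_one.mp h2
  have hgg : Commute (g * g) d := by
    refine mul_inv_eq_iff_eq_mul.mp ?_
    calc g * g * d * (g * g)⁻¹ = g * (g * d * g⁻¹) * g⁻¹ := by group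
      _ = g * d⁻¹ * g⁻¹ := by rw [h]
      _ = d := by rw [← conj_inv, h, inv_inv]
  obtain ⟨e, he, hge, hgge⟩ : ∃ e, e * e = z ∧ g * e * g⁻¹ = e⁻¹ ∧ Commute (g * g) e :=
    ⟨d ^ (orderOf d / 4),
      hz.orderOf_eq_four_iff.mp (orderOf_pow_orderOf_div (hG.orderOf_ne_zero d) hd4),
      by rw [← conj_pow, h, inv_pow], hgg.pow_right _⟩
  obtain ⟨m, hm⟩ := hg
  obtain ⟨f, hf, hgf, hfe⟩ : ∃ f, f * f = z ∧ Commute g f ∧ Commute f e := by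
    refine ⟨g ^ (2 * m), hz.orderOf_eq_four_iff.mp ?_, (Commute.refl g).pow_right _, ?_⟩
    · rw [show 2 * m = orderOf g / 4 by omega]
      exact orderOf_pow_orderOf_div (hG.orderOf_ne_zero g) (by omega)
    · rw [pow_mul, sq]; exact hgge.pow_left m
  have hge' : Commute g e := by
    rcases hz.eq_or_eq_inv_of_commute hf he hfe with rfl | rfl
    exacts [hgf, hgf.inv_right]
  have hee : e⁻¹ = e := by rw [← hge, hge'.eq, mul_inv_cancel_right]
  exact hz.ne_one (he ▸ inv_eq_iff_mul_eq_one.mp hee)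

theorem conj_eq_inv_or_mul_eq_of_conj_mul_self (hz : IsUniqueInvolution z) (hG : IsPGroup 2 G)
    {a x : G} (ha : 8 ∣ orderOf a) (hx : x * x = z) (h : x * (a * a) * x⁻¹ = (a * a)⁻¹) :
    x * a * x⁻¹ = a⁻¹ ∨ x * a = 1 ∨ x * a = z := by
  have hsq : a⁻¹ * a⁻¹ = (x * a * x⁻¹) * (x * a * x⁻¹) := by
    calc a⁻¹ * a⁻¹ = (a * a)⁻¹ := by group
      _ = _ := by rw [← h]; group
  rcases hz.eq_one_or_eq_of_mul_self_eq_one (hz.mul_self_eq_one_of_conj_eq_inv hG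
      (by rwa [orderOf_inv]) (conj_inv_mul_eq_inv_of_mul_self_eq hsq)) with h1 | h1
  · left
    calc x * a * x⁻¹ = a⁻¹ * (a⁻¹⁻¹ * (x * a * x⁻¹)) := by group
      _ = a⁻¹ := by rw [h1, mul_one]
  · right
    refine hz.eq_one_or_eq_of_mul_self_eq_one ?_
    calc x * a * (x * a) = x * (a⁻¹⁻¹ * (x * a * x⁻¹)) * x := by group
      _ = z * (x * x) := by rw [h1, ← mul_assoc, (hz.commute x).eq]
      _ = 1 := by rw [hx, hz.mul_self]

theorem mul_self_conj_ne_inv (hz : IsUniqueInvolution z) (hG : IsPGroup 2 G) {h s : G}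
    (hh : orderOf h = 8) (hs : orderOf s = 8) : (h * h) * s * (h * h)⁻¹ ≠ s⁻¹ := by
  intro hus
  set u := h * h with hu_def
  set v := s * s with hv_def
  have hu : u * u = z := hz.mul_self_mul_mul_self_eq hh
  have hv : v * v = z := hz.mul_self_mul_mul_self_eq hs
  have huv : u * v * u⁻¹ = v⁻¹ := by
    calc u * v * u⁻¹ = (u * s * u⁻¹) * (u * s * u⁻¹) := by rw [hv_def]; group
      _ = v⁻¹ := by rw [hus, hv_def]; group
  have hvu : v * u * v⁻¹ = u⁻¹ := by
    rw [conj_eq_mul_inv_of_conj_eq_inv huv, hv, ← hu]; group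
  have hvh : v * h * v⁻¹ = h⁻¹ := by
    refine (hz.conj_eq_inv_or_mul_eq_of_conj_mul_self hG (by rw [hh]) hv hvu).resolve_right ?_
    intro hvh
    have hvh_comm : Commute (v * h) h := by
      rcases hvh with e | e <;> rw [e]
      exacts [Commute.one_left h, hz.commute h]
    have hv_comm : Commute v h := by simpa using hvh_comm.mul_left (Commute.refl h).inv_left
    rw [(hv_comm.mul_right hv_comm).eq, mul_inv_cancel_right] at hvu
    exact hz.ne_one (hu ▸ eq_inv_iff_mul_eq_one.mp hvu)
  have hhv : h * v * h⁻¹ = v * u⁻¹ := conj_eq_mul_inv_of_conj_eq_inv hvh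
  have hsu : s * u * s⁻¹ = u * v⁻¹ := conj_eq_mul_inv_of_conj_eq_inv hus
  set t := h * s with ht_def
  have htu : t * u * t⁻¹ = v :=
    calc t * u * t⁻¹ = h * (s * u * s⁻¹) * h⁻¹ := by rw [ht_def]; group
      _ = u * (h * v * h⁻¹)⁻¹ := by rw [hsu, hu_def]; group
      _ = (u * u) * v⁻¹ := by rw [hhv]; group
      _ = v := by rw [hu, ← hv]; group
  have htv : t * v * t⁻¹ = v * u⁻¹ :=
    calc t * v * t⁻¹ = h * v * h⁻¹ := by rw [ht_def, hv_def]; group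
      _ = v * u⁻¹ := hhv
  have htvu : t * (v * u⁻¹) * t⁻¹ = u :=
    calc t * (v * u⁻¹) * t⁻¹ = (t * v * t⁻¹) * (t * u * t⁻¹)⁻¹ := by group
      _ = (v * u * v⁻¹)⁻¹ := by rw [htv, htu]; group
      _ = u := by rw [hvu, inv_inv]
  rw [hG.eq_of_conj_three_cycle (by norm_num) htu htv htvu, mul_inv_cancel_right] at huv
  exact hz.ne_one (hu ▸ eq_inv_iff_mul_eq_one.mp huv)

theorem conj_mul_self_eq_inv (hz : IsUniqueInvolution z) (hG : IsPGroup 2 G) {h x : G}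
    (hh : orderOf h = 8) (hx : x * x = z) (hxh : ¬Commute x (h * h)) :
    x * (h * h) * x⁻¹ = (h * h)⁻¹ := by
  set u := h * h
  have hu : u * u = z := hz.mul_self_mul_mul_self_eq hh
  set s := u⁻¹ * x with hs_def
  have hus : u * s * u⁻¹ = s⁻¹ := conj_inv_mul_eq_inv_of_mul_self_eq (hu.trans hx.symm)
  have hxs : x = u * s := by rw [hs_def]; group
  rcases hz.eq_one_or_eq_or_mul_self_eq_or_eight_dvd hG s with hs | hs | hs | hs
  · exact absurd (by rw [hxs, hs, mul_one]) hxh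
  · exact absurd (by rw [hxs, hs]; exact (Commute.refl u).mul_left (hz.commute u)) hxh
  · calc x * u * x⁻¹ = u * (s * u * s⁻¹) * u⁻¹ := by rw [hxs]; group
      _ = u * (u * (s * s)⁻¹) * u⁻¹ := by rw [conj_eq_mul_inv_of_conj_eq_inv hus]
      _ = u⁻¹ := by rw [hs, ← hu]; group
  · exact absurd (by rw [← conj_pow, hus, inv_pow]) (hz.mul_self_conj_ne_inv hG hh
      (orderOf_pow_orderOf_div (hG.orderOf_ne_zero s) hs))

theorem exists_mem_orderOf_eq_eight (hz : IsUniqueInvolution z) (hG : IsPGroup 2 G)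
    (A : Subgroup G) [IsMulCommutative A] (hA : 4 < (A : Set G).encard) :
    ∃ h ∈ A, orderOf h = 8 := by
  classical
  by_contra! hno
  have hsmall : ∀ a ∈ A, a = 1 ∨ a = z ∨ a * a = z := fun a ha =>
    (hz.eq_one_or_eq_or_mul_self_eq_or_eight_dvd hG a).imp_right <| Or.imp_right <|
      (Or.resolve_right · fun h8 =>
        hno _ (pow_mem ha _) (orderOf_pow_orderOf_div (hG.orderOf_ne_zero a) h8))
  obtain ⟨w, hw⟩ : ∃ w, ∀ a ∈ A, a * a = z → a = w ∨ a = w⁻¹ := by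
    by_cases hex : ∃ w ∈ A, w * w = z
    · obtain ⟨w, hwA, hw⟩ := hex
      exact ⟨w, fun a ha haz => hz.eq_or_eq_inv_of_commute hw haz (setLike_mul_comm hwA ha)⟩
    · exact ⟨1, fun a ha haz => absurd ⟨a, ha, haz⟩ hex⟩
  have hsub : (A : Set G) ⊆ (({1, z, w, w⁻¹} : Finset G) : Set G) := by
    intro a ha
    rcases hsmall a ha with rfl | rfl | haz
    · simp
    · simp
    · rcases hw a ha haz with rfl | rfl <;> simp
  refine not_le_of_gt hA ?_
  calc (A : Set G).encard ≤ (({1, z, w, w⁻¹} : Finset G) : Set G).encard :=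
        Set.encard_le_encard hsub
    _ ≤ 4 := by rw [Set.encard_coe_eq_coe_finsetCard]; exact_mod_cast Finset.card_le_four

theorem conj_eq_inv_of_notMem (hz : IsUniqueInvolution z) (hG : IsPGroup 2 G)
    {A : Subgroup G} [IsMulCommutative A] {h x : G} (hhA : h ∈ A) (hh : orderOf h = 8)
    (hx : x * x = z) (hxA : x ∉ A) {a : G} (ha : a ∈ A) : x * a * x⁻¹ = a⁻¹ := by
  have hu := hz.mul_self_mul_mul_self_eq hh
  have huA : h * h ∈ A := mul_mem hhA hhA
  have hzA : z ∈ A := hu ▸ mul_mem huA huA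
  have hxu : x * (h * h) * x⁻¹ = (h * h)⁻¹ := by
    refine hz.conj_mul_self_eq_inv hG hh hx fun hc => hxA ?_
    rcases hz.eq_or_eq_inv_of_commute hu hx hc.symm with rfl | rfl
    exacts [huA, inv_mem huA]
  induction hn : orderOf a using Nat.strong_induction_on generalizing a with
  | _ n ih =>
  rcases hz.eq_one_or_eq_or_mul_self_eq_or_eight_dvd hG a with rfl | rfl | ha4 | ha8
  · simp
  · rw [← (hz.commute x).eq, mul_inv_cancel_right, inv_eq_of_mul_eq_one_right hz.mul_self]
  · rcases hz.eq_or_eq_inv_of_commute hu ha4 (setLike_mul_comm huA ha) with rfl | rfl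
    · exact hxu
    · rw [← conj_inv, hxu]
  · have hlt : orderOf (a * a) < n := by
      rw [← hn, ← sq, orderOf_pow_of_dvd two_ne_zero (dvd_trans ⟨4, rfl⟩ ha8)]
      exact Nat.div_lt_self (Nat.pos_of_ne_zero (hG.orderOf_ne_zero a)) one_lt_two
    rcases hz.conj_eq_inv_or_mul_eq_of_conj_mul_self hG ha8 hx
      (ih _ hlt (mul_mem ha ha) rfl) with h1 | h1
    · exact h1
    · refine absurd ?_ hxA
      rw [← mul_inv_cancel_right x a]
      refine mul_mem ?_ (inv_mem ha)
      rcases h1 with h1 | h1 <;> rw [h1]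
      exacts [one_mem A, hzA]

end IsUniqueInvolution

end

theorem stmt_8_general (G : Type*) [Group G] (hG : IsPGroup 2 G)
    (huniq : ∃! x : G, orderOf x = 2)
    (A : Subgroup G) (hA : IsMulCommutative A)
    (hmax : ∀ B : Subgroup G, IsMulCommutative B → A ≤ B → B = A)
    (hbig : 4 < (A : Set G).encard)
    (b : G) (hb4 : orderOf b = 4) (hbA : b ∉ A) :
    {x : G | orderOf x = 4} \ (A : Set G) = b • (A : Set G) := by
  obtain ⟨z, hz2, huz⟩ := huniq
  have hz : IsUniqueInvolution z := fun w => ⟨huz w, fun h => h ▸ hz2⟩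
  obtain ⟨h, hhA, hh⟩ := hz.exists_mem_orderOf_eq_eight hG A hbig
  have hinv : ∀ x, orderOf x = 4 → x ∉ A → ∀ a ∈ A, x * a * x⁻¹ = a⁻¹ := fun x hx hxA a ha =>
    hz.conj_eq_inv_of_notMem hG hhA hh (hz.orderOf_eq_four_iff.mp hx) hxA ha
  ext g
  rw [Set.mem_smul_set_iff_inv_smul_mem, smul_eq_mul]
  constructor
  · rintro ⟨hg, hgA⟩
    exact mem_of_forall_commute_of_maximal hA hmax fun a ha =>
      commute_inv_mul_of_conj_eq_inv (hinv b hb4 hbA a ha) (hinv g hg hgA a ha)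
  · intro hg
    obtain ⟨a, ha, rfl⟩ : ∃ a ∈ A, g = b * a := ⟨_, hg, by group⟩
    refine ⟨hz.orderOf_eq_four_iff.mpr ?_, fun hbaA => hbA ?_⟩
    · calc b * a * (b * a) = (b * a * b⁻¹) * ((b * b) * a) := by group
        _ = z := by
          rw [hinv b hb4 hbA a ha, hz.orderOf_eq_four_iff.mp hb4, (hz.commute a).eq,
            inv_mul_cancel_left]
    · simpa using mul_mem hbaA (inv_mem ha)

/-- In an infinite non-abelian 2-group `G` with a unique element of order 2, if `A` is a
maximal abelian subgroup with more than 4 elements and `b` is an element of order 4 with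
`b ∉ A`, then the set of order-4 elements outside `A` equals the left coset `b • A`. -/
theorem stmt_8 (G : Type*) [Group G] [Infinite G] (hG : IsPGroup 2 G)
    (hna : ∃ x y : G, x * y ≠ y * x) (huniq : ∃! x : G, orderOf x = 2)
    (A : Subgroup G) (hA : IsMulCommutative A)
    (hmax : ∀ B : Subgroup G, IsMulCommutative B → A ≤ B → B = A)
    (hbig : 4 < (A : Set G).encard)
    (b : G) (hb4 : orderOf b = 4) (hbA : b ∉ A) :
    {x : G | orderOf x = 4} \ (A : Set G) = b • (A : Set G) :=
  stmt_8_general G hG huniq A hA hmax hbig b hb4 hbA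
end

section
/- Let G be an infinite non-abelian 2-group (every element has order a power of 2) with a unique element of order 2, denoted −1 (so orderOf (−1) = 2). Let A be a maximal abelian subgroup of G and let x ∈ G with x ∉ A and x² ∈ A. Then x² = −1. -/
/-! In a 2-group with a unique involution `t`, `t` is central and is a power of every nontrivial
element, so commuting square roots of `t` agree up to inversion. Hence if `c` inverts some `s`
with `s² ≠ 1`, then `c⁴ = 1`: a power `r` of `s` and a power `q` of `c²` are commuting square
roots of `t`, so `c` both commutes with `r = q^{±1}` and inverts it.

In the theorem, `x² = c²` for some `c ∈ A`, since otherwise halving inside the abelian group `A`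
shows `A ≤ ⟨x²⟩ ≤ ⟨x⟩`, against maximality. Then `c` inverts `c⁻¹x ∉ A`, so `x⁴ = c⁴ = 1`. -/

open Subgroup

namespace Subgroup

variable {G : Type*} [Group G]

theorem center_le_of_isMulCommutative_maximal (A : Subgroup G) [IsMulCommutative A]
    (hmax : ∀ B : Subgroup G, IsMulCommutative B → A ≤ B → B = A) : center G ≤ A := by
  set B := centralizer (centralizer (A : Set G) : Set G)
  have hB : B ≤ centralizer A := centralizer_le (le_centralizer A)
  have hBcomm : IsMulCommutative B := le_centralizer_iff_isMulCommutative.mp (centralizer_le hB)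
  rw [← hmax B hBcomm Set.subset_centralizer_centralizer]
  exact center_le_centralizer _

end Subgroup

section UniqueInvolution

variable {G : Type*} [Group G] {t : G}

theorem eq_one_or_eq_of_sq_eq_one (htu : ∀ s : G, orderOf s = 2 → s = t) {g : G}
    (hg : g ^ 2 = 1) : g = 1 ∨ g = t :=
  or_iff_not_imp_left.mpr fun hg1 ↦ htu g (orderOf_eq_prime hg hg1)

theorem mem_center_of_unique_involution (ht : orderOf t = 2)
    (htu : ∀ s : G, orderOf s = 2 → s = t) : t ∈ center G := by
  rw [mem_center_iff]
  intro g
  have hconj : g * t * g⁻¹ = t := htu _ (by rw [← MulAut.conj_apply, MulEquiv.orderOf_eq, ht])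
  exact mul_inv_eq_iff_eq_mul.mp hconj

theorem mem_zpowers_of_unique_involution (hG : IsPGroup 2 G)
    (htu : ∀ s : G, orderOf s = 2 → s = t) {g : G} (hg : g ≠ 1) : t ∈ zpowers g := by
  obtain ⟨k, hk⟩ := IsPGroup.iff_orderOf.mp hG g
  have hk0 : k ≠ 0 := by rintro rfl; exact hg (orderOf_eq_one_iff.mp hk)
  have h2 : 2 ∣ orderOf g := hk ▸ dvd_pow_self 2 hk0
  rw [← htu _ (orderOf_pow_orderOf_div (by simp [hk]) h2)]
  exact npow_mem_zpowers g _

theorem exists_zpow_sq_eq_of_unique_involution (hG : IsPGroup 2 G)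
    (htu : ∀ s : G, orderOf s = 2 → s = t) {g : G} (hg : g ^ 2 ≠ 1) :
    ∃ n : ℤ, (g ^ n) ^ 2 = t := by
  obtain ⟨n, hn⟩ := mem_zpowers_iff.mp (mem_zpowers_of_unique_involution hG htu hg)
  exact ⟨n, by rw [← hn, ← zpow_natCast, ← zpow_natCast, ← zpow_mul, ← zpow_mul, mul_comm]⟩

theorem eq_or_eq_inv_of_sq_eq (ht : orderOf t = 2) (htu : ∀ s : G, orderOf s = 2 → s = t)
    {u v : G} (huv : Commute u v) (hu : u ^ 2 = t) (hv : v ^ 2 = t) : u = v ∨ u = v⁻¹ := by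
  have hsq : (u * v) ^ 2 = 1 := by
    rw [huv.mul_pow, hu, hv, ← pow_two, ← ht, pow_orderOf_eq_one]
  rcases eq_one_or_eq_of_sq_eq_one htu hsq with h | h
  · exact Or.inr (eq_inv_of_mul_eq_one_left h)
  · exact Or.inl (mul_right_cancel (h.trans (hv.symm.trans (pow_two v))))

theorem sq_sq_eq_one_of_conj_eq_inv (hG : IsPGroup 2 G) (ht : orderOf t = 2)
    (htu : ∀ s : G, orderOf s = 2 → s = t) {c s : G} (hs : s ^ 2 ≠ 1)
    (hcs : c * s * c⁻¹ = s⁻¹) : (c ^ 2) ^ 2 = 1 := by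
  by_contra hc
  obtain ⟨m, hq⟩ := exists_zpow_sq_eq_of_unique_involution hG htu hc
  obtain ⟨n, hr⟩ := exists_zpow_sq_eq_of_unique_involution hG htu hs
  have hconj : MulAut.conj c (s ^ n) = (s ^ n)⁻¹ := by
    rw [map_zpow, MulAut.conj_apply, hcs, inv_zpow]
  have hsc : Commute s (c ^ 2) := by
    refine (mul_inv_eq_iff_eq_mul.mp ?_).symm
    calc c ^ 2 * s * (c ^ 2)⁻¹ = c * (c * s * c⁻¹) * c⁻¹ := by rw [pow_two]; group
      _ = c * s⁻¹ * c⁻¹ := by rw [hcs]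
      _ = (c * s * c⁻¹)⁻¹ := by group
      _ = s := by rw [hcs, inv_inv]
  have hcr : Commute c (s ^ n) := by
    rcases eq_or_eq_inv_of_sq_eq ht htu (hsc.zpow_zpow n m) hr hq with h | h <;> rw [h]
    · exact ((Commute.refl c).pow_right 2).zpow_right m
    · exact (((Commute.refl c).pow_right 2).zpow_right m).inv_right
  have hinv : (s ^ n)⁻¹ = s ^ n := by rw [← hconj, MulAut.conj_apply, hcr.eq, mul_inv_cancel_right]
  have : orderOf (1 : G) = 2 := by rw [← inv_mul_cancel (s ^ n), hinv, ← pow_two, hr, ht]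
  simp at this

theorem exists_sq_eq_or_le_zpowers (hG : IsPGroup 2 G) (htu : ∀ s : G, orderOf s = 2 → s = t)
    (A : Subgroup G) [IsMulCommutative A] {z : G} (hz : z ∈ A) (hz1 : z ≠ 1) :
    (∃ c ∈ A, c ^ 2 = z) ∨ A ≤ zpowers z := by
  refine or_iff_not_imp_left.mpr fun hsq a ha ↦ ?_
  obtain ⟨k, hk⟩ := hG a
  induction k generalizing a with
  | zero => simp [by simpa using hk]
  | succ k ih =>
    obtain ⟨l, hl⟩ := mem_zpowers_iff.mp
      (ih (a ^ 2) (pow_mem ha 2) (by rw [← pow_mul, ← pow_succ']; exact hk))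
    -- writing `a² = z ^ (2i + e)`, the element `a * z⁻ⁱ` of `A` squares to `z ^ e`
    obtain ⟨i, rfl | rfl⟩ := Int.even_or_odd' l
    · have hb : (a * z ^ (-i)) ^ 2 = 1 := by
        rw [Commute.mul_pow (setLike_mul_comm ha (zpow_mem hz _)), ← hl]
        group
      have hbz : a * z ^ (-i) ∈ zpowers z := by
        rcases eq_one_or_eq_of_sq_eq_one htu hb with h | h <;> rw [h]
        · exact one_mem _
        · exact mem_zpowers_of_unique_involution hG htu hz1
      simpa using mul_mem hbz (zpow_mem_zpowers z i)
    · refine absurd ⟨a * z ^ (-i), mul_mem ha (zpow_mem hz _), ?_⟩ hsq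
      rw [Commute.mul_pow (setLike_mul_comm ha (zpow_mem hz _)), ← hl]
      group

end UniqueInvolution

theorem stmt_9_general (G : Type*) [Group G] (hG : IsPGroup 2 G)
    (t : G) (ht : orderOf t = 2) (htu : ∀ s : G, orderOf s = 2 → s = t)
    (A : Subgroup G) (hA : IsMulCommutative A)
    (hmax : ∀ B : Subgroup G, IsMulCommutative B → A ≤ B → B = A)
    (x : G) (hx : x ∉ A) (hx2 : x ^ 2 ∈ A) :
    x ^ 2 = t := by
  have htA : t ∈ A :=
    center_le_of_isMulCommutative_maximal A hmax (mem_center_of_unique_involution ht htu)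
  have hsqA : ∀ g : G, g ^ 2 = 1 → g ∈ A := fun g hg ↦ by
    rcases eq_one_or_eq_of_sq_eq_one htu hg with rfl | rfl
    exacts [one_mem A, htA]
  have hx21 : x ^ 2 ≠ 1 := fun h ↦ hx (hsqA x h)
  obtain ⟨c, hcA, hc⟩ : ∃ c ∈ A, c ^ 2 = x ^ 2 := by
    refine (exists_sq_eq_or_le_zpowers hG htu A hx2 hx21).resolve_right fun hle ↦ hx ?_
    have hzpow := hmax (zpowers x) inferInstance
      (hle.trans (zpowers_le.mpr (npow_mem_zpowers x 2)))
    exact hzpow ▸ mem_zpowers x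
  have hs : (c⁻¹ * x) ^ 2 ≠ 1 := fun h ↦ hx (by simpa using mul_mem hcA (hsqA _ h))
  have hcs : c * (c⁻¹ * x) * c⁻¹ = (c⁻¹ * x)⁻¹ :=
    calc c * (c⁻¹ * x) * c⁻¹ = x⁻¹ * x ^ 2 * c⁻¹ := by group
      _ = x⁻¹ * c ^ 2 * c⁻¹ := by rw [hc]
      _ = (c⁻¹ * x)⁻¹ := by group
  have hc4 := sq_sq_eq_one_of_conj_eq_inv hG ht htu hs hcs
  rw [hc] at hc4
  exact (eq_one_or_eq_of_sq_eq_one htu hc4).resolve_left hx21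

/-- In an infinite non-abelian 2-group `G` whose unique element of order 2 is `t`
(playing the role of `-1`), if `A` is a maximal abelian subgroup and `x ∉ A` satisfies
`x² ∈ A`, then `x² = t`. -/
theorem stmt_9 (G : Type*) [Group G] [Infinite G] (hG : IsPGroup 2 G)
    (hna : ∃ x y : G, x * y ≠ y * x)
    (t : G) (ht : orderOf t = 2) (htu : ∀ s : G, orderOf s = 2 → s = t)
    (A : Subgroup G) (hA : IsMulCommutative A)
    (hmax : ∀ B : Subgroup G, IsMulCommutative B → A ≤ B → B = A)
    (x : G) (hx : x ∉ A) (hx2 : x ^ 2 ∈ A) :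
    x ^ 2 = t :=
  stmt_9_general G hG t ht htu A hA hmax x hx hx2
end
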